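/- arXiv:2411.16271 — 5 statements merged into one kernel-verified Lean document; each statement's English description precedes it below -/
import Mathlib

section
/- There is no 4-stage explicit Runge–Kutta method satisfying simultaneously the eight fourth-order order conditions together with the three equilibrium-preservation conditions a_{2,1}c₁ = c₂²/2, a_{3,1}c₁ + a_{3,2}c₂ = c₃²/2, and a_{3,2}a_{2,1}c₁ = c₃³/6, where c₄ = 1 and c_i = Σ_{j<i} a_{i,j}. (In particular, for the classical consistency abscissas, the combined system of 11 polynomial constraints in the 10 free parameters has no solution.) -/
/-!
The equilibrium conditions say that the internal stages reproduce `c²/2` and `c³/6` exactly.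
They turn `bᵀAc = 1/6` and `bᵀ(c·Ac) = 1/8` into `bᵀc² = 1/3` and `bᵀc³ = 1/4` with the
`b₁` term missing, and `bᵀA²c = 1/24` into `b₃c₃³ = 1/4`. Comparing with the quadrature
conditions gives `b₁c₁² = 0` and `b₂c₂³ = 0`, while `bᵀA²c ≠ 0` forces `c₁, c₂ ≠ 0`; hence
`b₁ = b₂ = 0`. A single node would then carry the moments `1/2, 1/3, 1/4` of `t, t², t³`,
impossible since `(b c²)² = (b c)(b c³)` but `(1/3)² ≠ (1/2)(1/4)`.
-/

theorem not_single_node_moments {K : Type*} [Field K] [CharZero K] (b c : K) :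
    ¬ (b * c = 1 / 2 ∧ b * c ^ 2 = 1 / 3 ∧ b * c ^ 3 = 1 / 4) := by
  rintro ⟨h1, h2, h3⟩
  have key : (b * c ^ 2) ^ 2 = (b * c) * (b * c ^ 3) := by ring
  rw [h1, h2, h3] at key
  norm_num at key

theorem not_order_four_of_equilibrium {K : Type*} [Field K] [CharZero K]
    (b1 b2 b3 c1 c2 c3 a21 a31 a32 : K)
    (hbc : b1 * c1 + b2 * c2 + b3 * c3 = 1 / 2)
    (hbc2 : b1 * c1 ^ 2 + b2 * c2 ^ 2 + b3 * c3 ^ 2 = 1 / 3)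
    (hbAc : b2 * (a21 * c1) + b3 * (a31 * c1 + a32 * c2) = 1 / 6)
    (hbc3 : b1 * c1 ^ 3 + b2 * c2 ^ 3 + b3 * c3 ^ 3 = 1 / 4)
    (hbcAc : b2 * c2 * (a21 * c1) + b3 * c3 * (a31 * c1 + a32 * c2) = 1 / 8)
    (hbA2c : b3 * (a32 * (a21 * c1)) = 1 / 24)
    (hAc2 : a21 * c1 = c2 ^ 2 / 2)
    (hAc3 : a31 * c1 + a32 * c2 = c3 ^ 2 / 2)
    (hA2c3 : a32 * (a21 * c1) = c3 ^ 3 / 6) :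
    False := by
  rw [hAc2, hAc3] at hbAc hbcAc
  have hAc2_ne : a21 * c1 ≠ 0 := by
    intro h
    simp [h] at hbA2c
  have hc1 : c1 ≠ 0 := right_ne_zero_of_mul hAc2_ne
  have hc2 : c2 ≠ 0 := by
    rintro rfl
    simp [hAc2] at hAc2_ne
  have hb1 : b1 = 0 :=
    (mul_eq_zero_iff_right (pow_ne_zero 2 hc1)).mp (by linear_combination hbc2 - 2 * hbAc)
  have hb2 : b2 = 0 :=
    (mul_eq_zero_iff_right (pow_ne_zero 3 hc2)).mp
      (by linear_combination 2 * hbcAc - 6 * hbA2c + 6 * b3 * hA2c3)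
  subst hb1 hb2
  exact not_single_node_moments b3 c3
    ⟨by linear_combination hbc, by linear_combination hbc2, by linear_combination hbc3⟩

/-- There is no 4-stage explicit Runge–Kutta method satisfying simultaneously the
eight fourth-order order conditions together with the three equilibrium-preservation
conditions a₂₁c₁ = c₂²/2, a₃₁c₁ + a₃₂c₂ = c₃²/2 and a₃₂a₂₁c₁ = c₃³/6, where
c_i = Σ_{j<i} a_{i,j}, c₄ = 1 and b = (a₄₀, a₄₁, a₄₂, a₄₃). -/
theorem stmt_5 :
    ¬ ∃ a10 a20 a21 a30 a31 a32 b0 b1 b2 b3 : ℝ,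
      let c1 := a10
      let c2 := a20 + a21
      let c3 := a30 + a31 + a32
      -- consistency: c₄ = b0 + b1 + b2 + b3 = 1 coincides with the first order condition
      (b0 + b1 + b2 + b3 = 1) ∧
      (b1 * c1 + b2 * c2 + b3 * c3 = 1 / 2) ∧
      (b1 * c1 ^ 2 + b2 * c2 ^ 2 + b3 * c3 ^ 2 = 1 / 3) ∧
      (b2 * (a21 * c1) + b3 * (a31 * c1 + a32 * c2) = 1 / 6) ∧
      (b1 * c1 ^ 3 + b2 * c2 ^ 3 + b3 * c3 ^ 3 = 1 / 4) ∧
      (b2 * c2 * (a21 * c1) + b3 * c3 * (a31 * c1 + a32 * c2) = 1 / 8) ∧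
      (b2 * (a21 * c1 ^ 2) + b3 * (a31 * c1 ^ 2 + a32 * c2 ^ 2) = 1 / 12) ∧
      (b3 * (a32 * (a21 * c1)) = 1 / 24) ∧
      (a21 * c1 = c2 ^ 2 / 2) ∧
      (a31 * c1 + a32 * c2 = c3 ^ 2 / 2) ∧
      (a32 * (a21 * c1) = c3 ^ 3 / 6) := by
  rintro ⟨a10, a20, a21, a30, a31, a32, -, b1, b2, b3,
    -, hbc, hbc2, hbAc, hbc3, hbcAc, -, hbA2c, hAc2, hAc3, hA2c3⟩
  exact not_order_four_of_equilibrium b1 b2 b3 _ _ _ a21 a31 a32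
    hbc hbc2 hbAc hbc3 hbcAc hbA2c hAc2 hAc3 hA2c3
end

section
/- EFRK(3,3) energy stability matrices: for a symmetric positive semi-definite matrix S, the matrices (2/3·I + 2/9·S)⁻¹, (3I + 2S + 2/3·S²)⁻¹, (3I + 2S + 2/3·S²)⁻¹(4I + S), (9I + 9S + 4S² + 2/3·S³)⁻¹(75/4·I + 11S + 21/2·S² + 2S³), (9I + 9S + 4S² + 2/3·S³)⁻¹(3/4·I + S + S²), and (3I + 2S + 2/3·S²)⁻¹(3/2·I + ½S) are all symmetric positive semi-definite. -/
/-!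
Each of the six matrices is `q(S)⁻¹ p(S)` for real polynomials `p`, `q` with nonnegative
coefficients and `q(0) > 0` (with `p = 1` for the first two). For such polynomials `q(S)` is
positive definite and `p(S)` positive semidefinite, and the two commute; a product of commuting
positive semidefinite matrices is positive semidefinite, as in any C⋆-algebra.
-/

open Matrix Polynomial
open scoped MatrixOrder ComplexOrder

namespace Matrix

variable {n 𝕜 : Type*} [Fintype n] [DecidableEq n] [RCLike 𝕜]

theorem PosSemidef.mul_of_commute {A B : Matrix n n 𝕜} (hA : A.PosSemidef) (hB : B.PosSemidef)
    (h : Commute A B) : (A * B).PosSemidef :=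
  (h.mul_nonneg hA.nonneg hB.nonneg).posSemidef

theorem PosDef.inv_mul_of_commute {A B : Matrix n n 𝕜} (hA : A.PosDef) (hB : B.PosSemidef)
    (h : Commute A B) : (A⁻¹ * B).PosSemidef := by
  obtain ⟨u, rfl⟩ := hA.isUnit
  refine hA.inv.posSemidef.mul_of_commute hB ?_
  rw [← coe_units_inv]
  exact h.units_inv_left

variable {S : Matrix n n 𝕜} {p : ℝ[X]}

theorem PosSemidef.aeval (hS : S.PosSemidef) (hp : ∀ i, 0 ≤ p.coeff i) :
    (Polynomial.aeval S p).PosSemidef := by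
  rw [aeval_eq_sum_range]
  exact posSemidef_sum _ fun i _ => (hS.pow i).smul (hp i)

theorem PosSemidef.posDef_aeval (hS : S.PosSemidef) (hp : ∀ i, 0 ≤ p.coeff i)
    (hp₀ : 0 < p.coeff 0) : (Polynomial.aeval S p).PosDef := by
  rw [aeval_eq_sum_range, Finset.sum_range_succ', pow_zero, add_comm]
  exact (PosDef.one.smul hp₀).add_posSemidef
    (posSemidef_sum _ fun i _ => (hS.pow (i + 1)).smul (hp (i + 1)))

end Matrix

/-- EFRK(3,3) energy stability matrices: for a symmetric positive semi-definite S, the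
six matrices listed below are all symmetric positive semi-definite. -/
theorem stmt_10 {N : ℕ} (S : Matrix (Fin N) (Fin N) ℝ) (hS : S.PosSemidef) :
    (((2 / 3 : ℝ) • 1 + (2 / 9 : ℝ) • S)⁻¹).PosSemidef ∧
    (((3 : ℝ) • 1 + (2 : ℝ) • S + (2 / 3 : ℝ) • S ^ 2)⁻¹).PosSemidef ∧
    (((3 : ℝ) • 1 + (2 : ℝ) • S + (2 / 3 : ℝ) • S ^ 2)⁻¹
        * ((4 : ℝ) • 1 + S)).PosSemidef ∧
    (((9 : ℝ) • 1 + (9 : ℝ) • S + (4 : ℝ) • S ^ 2 + (2 / 3 : ℝ) • S ^ 3)⁻¹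
        * ((75 / 4 : ℝ) • 1 + (11 : ℝ) • S + (21 / 2 : ℝ) • S ^ 2
            + (2 : ℝ) • S ^ 3)).PosSemidef ∧
    (((9 : ℝ) • 1 + (9 : ℝ) • S + (4 : ℝ) • S ^ 2 + (2 / 3 : ℝ) • S ^ 3)⁻¹
        * ((3 / 4 : ℝ) • 1 + S + S ^ 2)).PosSemidef ∧
    (((3 : ℝ) • 1 + (2 : ℝ) • S + (2 / 3 : ℝ) • S ^ 2)⁻¹
        * ((3 / 2 : ℝ) • 1 + (1 / 2 : ℝ) • S)).PosSemidef := by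
  have hq₁ := hS.posDef_aeval (p := (2 / 3 : ℝ) • 1 + (2 / 9 : ℝ) • X)
    (fun i => by simp [coeff_X, coeff_one]; positivity) (by simp)
  have hq₂ := hS.posDef_aeval (p := (3 : ℝ) • 1 + (2 : ℝ) • X + (2 / 3 : ℝ) • X ^ 2)
    (fun i => by simp [coeff_X, coeff_one]; positivity) (by simp)
  have hq₃ := hS.posDef_aeval
    (p := (9 : ℝ) • 1 + (9 : ℝ) • X + (4 : ℝ) • X ^ 2 + (2 / 3 : ℝ) • X ^ 3)
    (fun i => by simp [coeff_X, coeff_one]; positivity) (by simp)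
  have hp₁ := hS.aeval (p := (4 : ℝ) • 1 + X)
    (fun i => by simp [coeff_X, coeff_one]; positivity)
  have hp₂ := hS.aeval
    (p := (75 / 4 : ℝ) • 1 + (11 : ℝ) • X + (21 / 2 : ℝ) • X ^ 2 + (2 : ℝ) • X ^ 3)
    (fun i => by simp [coeff_X, coeff_one]; positivity)
  have hp₃ := hS.aeval (p := (3 / 4 : ℝ) • 1 + X + X ^ 2)
    (fun i => by simp [coeff_X, coeff_one]; positivity)
  have hp₄ := hS.aeval (p := (3 / 2 : ℝ) • 1 + (1 / 2 : ℝ) • X)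
    (fun i => by simp [coeff_X, coeff_one]; positivity)
  have h₃ := hq₂.inv_mul_of_commute hp₁ ((Commute.all _ _).map _)
  have h₄ := hq₃.inv_mul_of_commute hp₂ ((Commute.all _ _).map _)
  have h₅ := hq₃.inv_mul_of_commute hp₃ ((Commute.all _ _).map _)
  have h₆ := hq₂.inv_mul_of_commute hp₄ ((Commute.all _ _).map _)
  simp only [map_add, map_smul, map_one, map_pow, aeval_X] at hq₁ hq₂ h₃ h₄ h₅ h₆
  exact ⟨hq₁.inv.posSemidef, hq₂.inv.posSemidef, h₃, h₄, h₅, h₆⟩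
end

section
/- For the EFRK(1,1) scheme u^{n+1} = (I − τL)⁻¹(u^n + τN(u^n)) with L = Δ_N(−ε²Δ_N + κI) and N(u) = Δ_N(f(u) − κu), the solution conserves the discrete mean: ⟨u^{n+1} − u^n, 1⟩ = 0, provided Δ_N is symmetric and Δ_N 1 = 0. -/
open Matrix

/-- EFRK(1,1) mass conservation: for u^{n+1} = (I − τL)⁻¹(u^n + τN(u^n)) with
L = Δ_N(−ε²Δ_N + κI) and N(u) = Δ_N(f(u) − κu), one has ⟨u^{n+1} − u^n, 1⟩ = 0,
provided Δ_N is symmetric, Δ_N 1 = 0, and I − τL is invertible. -/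
theorem stmt_11 {N : ℕ} (Δ : Matrix (Fin N) (Fin N) ℝ) (hΔ : Δ.IsSymm)
    (hΔ1 : Δ *ᵥ (fun _ => (1 : ℝ)) = 0)
    (ε κ τ : ℝ) (hε : 0 < ε) (hκ : 0 < κ) (hτ : 0 < τ)
    (f : ℝ → ℝ) (u : Fin N → ℝ)
    (L : Matrix (Fin N) (Fin N) ℝ) (hL : L = Δ * ((-(ε ^ 2)) • Δ + κ • 1))
    (hunit : IsUnit (1 - τ • L))
    (uNext : Fin N → ℝ)
    (hscheme : uNext = (1 - τ • L)⁻¹ *ᵥ (u + τ • (Δ *ᵥ (fun i => f (u i) - κ * u i)))) :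
    (uNext - u) ⬝ᵥ (fun _ => (1 : ℝ)) = 0 := by
  set one : Fin N → ℝ := fun _ => (1 : ℝ) with hone
  have hΔone : one ᵥ* Δ = 0 := by
    have : one ᵥ* Δᵀ = 0 := by rw [Matrix.vecMul_transpose, hΔ1]
    rwa [hΔ.eq] at this
  have hLone : one ᵥ* L = 0 := by
    rw [hL, ← Matrix.vecMul_vecMul, hΔone, Matrix.zero_vecMul]
  have hA : one ᵥ* (1 - τ • L) = one := by
    have : one ᵥ* (τ • L) = τ • (one ᵥ* L) := by
      ext j; simp [Matrix.vecMul, dotProduct, Finset.mul_sum, mul_left_comm]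
    simp [Matrix.vecMul_sub, this, hLone, Matrix.vecMul_one]
  have hdet : IsUnit (1 - τ • L).det := (Matrix.isUnit_iff_isUnit_det _).mp hunit
  have hAinv : one ᵥ* (1 - τ • L)⁻¹ = one := by
    conv_lhs => rw [← hA, Matrix.vecMul_vecMul, Matrix.mul_nonsing_inv _ hdet, Matrix.vecMul_one]
  have hw : one ⬝ᵥ (Δ *ᵥ (fun i => f (u i) - κ * u i)) = 0 := by
    rw [Matrix.dotProduct_mulVec, hΔone, zero_dotProduct]
  rw [sub_dotProduct, hscheme]
  rw [dotProduct_comm, Matrix.dotProduct_mulVec, hAinv]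
  rw [dotProduct_add, dotProduct_smul, hw, smul_zero, add_zero,
    dotProduct_comm, sub_self]
end

section
/- Stability function value bound: for the Taylor polynomial φ_s(z) = Σ_{k=0}^s z^k/k! with s ∈ {1,2,3}, and θ = 1/2, the rational function Φ(z) = φ_s(−z/2)/φ_s(z/2) satisfies |Φ(z)| ≤ 1 for every complex z with Re(z) ≥ 0. -/
/-!
Write `φ_s(w) = E(w) + O(w)` with `E` the even and `O` the odd part, so that `φ_s(-w) = E(w) - O(w)`.
Since `‖E + O‖² - ‖E - O‖² = 4 Re (E · conj O)`, it suffices that `Re (E · conj O) ≥ 0` when `Re w ≥ 0`.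
For `s ≤ 3` this real part factors as `Re w` times a positive polynomial in `Re w` and `|w|²`.
-/

open Finset ComplexConjugate

namespace Complex

theorem norm_sub_le_norm_add {a b : ℂ} (h : 0 ≤ (a * conj b).re) : ‖a - b‖ ≤ ‖a + b‖ := by
  rw [norm_def, norm_def]
  gcongr
  rw [normSq_sub, normSq_add]
  linarith

end Complex

noncomputable def expTaylor (s : ℕ) (w : ℂ) : ℂ :=
  ∑ k ∈ range (s + 1), w ^ k / (k.factorial : ℂ)

theorem expTaylor_one (w : ℂ) : expTaylor 1 w = 1 + w := by
  simp [expTaylor, sum_range_succ]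

theorem expTaylor_two (w : ℂ) : expTaylor 2 w = (1 + w ^ 2 / 2) + w := by
  simp only [expTaylor, sum_range_succ, sum_range_zero, Nat.factorial]
  push_cast
  ring

theorem expTaylor_three (w : ℂ) : expTaylor 3 w = (1 + w ^ 2 / 2) + (w + w ^ 3 / 6) := by
  simp only [expTaylor, sum_range_succ, sum_range_zero, Nat.factorial]
  push_cast
  ring

theorem re_even_mul_conj_odd_two (w : ℂ) :
    ((1 + w ^ 2 / 2) * conj w).re = w.re * (1 + ‖w‖ ^ 2 / 2) := by
  rw [Complex.sq_norm, Complex.normSq_apply]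
  simp only [pow_succ, pow_zero, one_mul, Complex.mul_re, Complex.mul_im, Complex.add_re,
    Complex.add_im, Complex.conj_re, Complex.conj_im, Complex.one_re, Complex.one_im,
    Complex.div_ofNat_re, Complex.div_ofNat_im]
  ring

theorem re_even_mul_conj_odd_three (w : ℂ) :
    ((1 + w ^ 2 / 2) * conj (w + w ^ 3 / 6)).re =
      w.re * (1 + 2 / 3 * w.re ^ 2 + ‖w‖ ^ 4 / 12) := by
  rw [show ‖w‖ ^ 4 = (‖w‖ ^ 2) ^ 2 by ring, Complex.sq_norm, Complex.normSq_apply]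
  simp only [map_add, map_div₀, map_pow, map_ofNat]
  simp only [pow_succ, pow_zero, one_mul, Complex.mul_re, Complex.mul_im, Complex.add_re,
    Complex.add_im, Complex.conj_re, Complex.conj_im, Complex.one_re, Complex.one_im,
    Complex.div_ofNat_re, Complex.div_ofNat_im]
  ring

theorem norm_expTaylor_neg_le {s : ℕ} (hs : s = 1 ∨ s = 2 ∨ s = 3) {w : ℂ} (hw : 0 ≤ w.re) :
    ‖expTaylor s (-w)‖ ≤ ‖expTaylor s w‖ := by
  rcases hs with rfl | rfl | rfl
  · rw [expTaylor_one, expTaylor_one, ← sub_eq_add_neg]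
    exact Complex.norm_sub_le_norm_add (by simpa using hw)
  · rw [expTaylor_two, expTaylor_two, neg_sq, ← sub_eq_add_neg]
    refine Complex.norm_sub_le_norm_add ?_
    rw [re_even_mul_conj_odd_two]
    exact mul_nonneg hw (by positivity)
  · rw [expTaylor_three, expTaylor_three, neg_sq, Odd.neg_pow (by decide), neg_div, ← neg_add,
      ← sub_eq_add_neg]
    refine Complex.norm_sub_le_norm_add ?_
    rw [re_even_mul_conj_odd_three]
    exact mul_nonneg hw (by positivity)

/-- A-stability at θ = 1/2: for s ∈ {1,2,3} and φ_s(z) = Σ_{k=0}^s z^k/k!, the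
stability function Φ(z) = φ_s(−z/2)/φ_s(z/2) satisfies |Φ(z)| ≤ 1 whenever
Re(z) ≥ 0, i.e. |φ_s(−z/2)| ≤ |φ_s(z/2)|. -/
theorem stmt_12 (s : ℕ) (hs : s = 1 ∨ s = 2 ∨ s = 3) (z : ℂ) (hz : 0 ≤ z.re) :
    ‖∑ k ∈ Finset.range (s + 1), (-z / 2) ^ k / (Nat.factorial k : ℂ)‖ ≤
      ‖∑ k ∈ Finset.range (s + 1), (z / 2) ^ k / (Nat.factorial k : ℂ)‖ := by
  rw [neg_div]
  exact norm_expTaylor_neg_le hs (by simpa using div_nonneg hz zero_le_two)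
end

section
/- Energy difference estimate for gradient flows with stabilization: let Δ_N be symmetric negative definite on the mean-zero subspace, F(x) = (x²−1)²/4 with f = F', L = Δ_N(−ε²Δ_N + κI), N(u) = Δ_N(f(u) − κu). If u, v ∈ ℝ^N have mean zero, ‖u‖_∞ ≤ β, ‖v‖_∞ ≤ β, and κ ≥ max_{|ξ|≤β} |f'(ξ)|/2, then E(v) − E(u) ≤ ⟨v − u, Δ_N⁻¹(L v + N(u))⟩, where E(w) = −(ε²/2)⟨w, Δ_N w⟩ + ⟨F(w), 1⟩ (with F applied entrywise and the inner product weighted by cell volumes). -/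
open Matrix Finset

/-- Pointwise Taylor-type estimate for the quartic potential. -/
lemma quartic_taylor (κ β a b : ℝ)
    (hκ : ∀ ξ : ℝ, |ξ| ≤ β → |3 * ξ ^ 2 - 1| / 2 ≤ κ)
    (ha : |a| ≤ β) (hb : |b| ≤ β) :
    (b ^ 2 - 1) ^ 2 / 4 - (a ^ 2 - 1) ^ 2 / 4 ≤
      (a ^ 3 - a) * (b - a) + κ * (b - a) ^ 2 := by
  have h1 : (3 * a ^ 2 - 1) / 2 ≤ κ :=
    le_trans (by have := le_abs_self (3 * a ^ 2 - 1); linarith) (hκ a ha)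
  have h2 : (3 * b ^ 2 - 1) / 2 ≤ κ :=
    le_trans (by have := le_abs_self (3 * b ^ 2 - 1); linarith) (hκ b hb)
  nlinarith [mul_nonneg (sq_nonneg (b - a)) (by linarith : (0:ℝ) ≤ κ - (3 * a ^ 2 - 1) / 2),
    mul_nonneg (sq_nonneg (b - a)) (by linarith : (0:ℝ) ≤ κ - (3 * b ^ 2 - 1) / 2),
    sq_nonneg ((b - a) ^ 2)]

/-- Energy difference estimate for the stabilized Cahn–Hilliard gradient flow:
with Δ_N symmetric, Δ_N 1 = 0 and Δ_N negative definite on the mean-zero subspace,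
F(x) = (x²−1)²/4, f = F', L = Δ_N(−ε²Δ_N + κI), N(u) = Δ_N(f(u) − κu),
E(w) = −(ε²/2)⟨w, Δ_N w⟩ + ⟨F(w), 1⟩, if u, v are mean-zero, bounded by β in
max norm, and κ ≥ max_{|ξ|≤β} |f'(ξ)|/2, then
E(v) − E(u) ≤ ⟨v − u, Δ_N⁻¹(L v + N(u))⟩, where Δ_N⁻¹(L v + N(u)) is the unique
mean-zero vector g with Δ_N g = L v + N(u). -/
theorem stmt_15 {N : ℕ} (Δ : Matrix (Fin N) (Fin N) ℝ) (hΔ : Δ.IsSymm)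
    (hΔ1 : Δ *ᵥ (fun _ => (1 : ℝ)) = 0)
    (hΔneg : ∀ w : Fin N → ℝ, w ⬝ᵥ (fun _ => (1 : ℝ)) = 0 → w ≠ 0 →
      w ⬝ᵥ (Δ *ᵥ w) < 0)
    (ε κ β : ℝ) (hε : 0 < ε)
    (hκ : ∀ ξ : ℝ, |ξ| ≤ β → |3 * ξ ^ 2 - 1| / 2 ≤ κ)
    (F f : ℝ → ℝ) (hF : F = fun x => (x ^ 2 - 1) ^ 2 / 4)
    (hf : f = fun x => x ^ 3 - x)
    (E : (Fin N → ℝ) → ℝ)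
    (hE : E = fun w => -(ε ^ 2 / 2) * (w ⬝ᵥ (Δ *ᵥ w)) + ∑ i, F (w i))
    (u v : Fin N → ℝ)
    (hu0 : u ⬝ᵥ (fun _ => (1 : ℝ)) = 0) (hv0 : v ⬝ᵥ (fun _ => (1 : ℝ)) = 0)
    (hub : ∀ i, |u i| ≤ β) (hvb : ∀ i, |v i| ≤ β)
    (g : Fin N → ℝ) (hg0 : g ⬝ᵥ (fun _ => (1 : ℝ)) = 0)
    (hg : Δ *ᵥ g =
      (Δ * ((-(ε ^ 2)) • Δ + κ • 1)) *ᵥ v + Δ *ᵥ (fun i => f (u i) - κ * u i)) :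
    E v - E u ≤ (v - u) ⬝ᵥ g := by
  set w : Fin N → ℝ := v - u with hwdef
  have hw0 : w ⬝ᵥ (fun _ => (1 : ℝ)) = 0 := by
    rw [hwdef, sub_dotProduct, hu0, hv0, sub_zero]
  -- the explicit preimage
  set hvec : Fin N → ℝ :=
    ((-(ε ^ 2)) • Δ + κ • 1) *ᵥ v + (fun i => f (u i) - κ * u i) with hhdef
  have hΔh : Δ *ᵥ g = Δ *ᵥ hvec := by
    rw [hg, hhdef, Matrix.mulVec_add, Matrix.mulVec_mulVec]
  -- g and hvec differ by a constant vector
  set c : ℝ := (∑ i, (g i - hvec i)) / (N : ℝ) with hcdef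
  set m : Fin N → ℝ := (g - hvec) - c • (fun _ => (1 : ℝ)) with hmdef
  have hsumc : (N : ℝ) * c = ∑ i, (g i - hvec i) := by
    rcases eq_or_ne N 0 with hN | hN
    · subst hN; simp [hcdef]
    · rw [hcdef]; field_simp
  have hm0 : m ⬝ᵥ (fun _ => (1 : ℝ)) = 0 := by
    simp only [hmdef, dotProduct, Pi.sub_apply, Pi.smul_apply, smul_eq_mul, mul_one,
      Finset.sum_sub_distrib, Finset.sum_const, Finset.card_univ, Fintype.card_fin,
      nsmul_eq_mul]
    have hs := hsumc
    rw [Finset.sum_sub_distrib] at hs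
    linarith
  have hΔm : Δ *ᵥ m = 0 := by
    rw [hmdef, Matrix.mulVec_sub, Matrix.mulVec_sub, Matrix.mulVec_smul, hΔ1, hΔh]
    simp
  have hmzero : m = 0 := by
    by_contra hne
    have := hΔneg m hm0 hne
    rw [hΔm] at this
    simp at this
  have hgh : g = hvec + c • (fun _ => (1 : ℝ)) := by
    have : (g - hvec) - c • (fun _ => (1 : ℝ)) = 0 := hmzero
    funext i
    have := congrFun this i
    simp at this ⊢
    linarith
  -- compute w ⬝ᵥ g
  have hwg : w ⬝ᵥ g = -(ε ^ 2) * (w ⬝ᵥ (Δ *ᵥ v)) +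
      ∑ i, (f (u i) * w i + κ * (w i) ^ 2) := by
    rw [hgh, dotProduct_add, hhdef]
    have h1 : w ⬝ᵥ (c • (fun _ => (1 : ℝ))) = 0 := by
      rw [dotProduct_smul, hw0]; simp
    rw [h1, add_zero, Matrix.add_mulVec, Matrix.smul_mulVec, Matrix.smul_mulVec,
      Matrix.one_mulVec, dotProduct_add, dotProduct_add, dotProduct_smul, dotProduct_smul]
    have h2 : κ • (w ⬝ᵥ v) + w ⬝ᵥ (fun i => f (u i) - κ * u i) =
        ∑ i, (f (u i) * w i + κ * (w i) ^ 2) := by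
      simp only [dotProduct, smul_eq_mul, Finset.mul_sum, ← Finset.sum_add_distrib]
      apply Finset.sum_congr rfl
      intro i _
      have : w i = v i - u i := by rw [hwdef]; simp
      rw [this]; ring
    rw [add_assoc, h2]
    simp
  -- symmetry of the bilinear form
  have hsym : ∀ x y : Fin N → ℝ, x ⬝ᵥ (Δ *ᵥ y) = y ⬝ᵥ (Δ *ᵥ x) := by
    intro x y
    rw [dotProduct_mulVec, ← Matrix.mulVec_transpose, hΔ.eq, dotProduct_comm]
  -- quadratic identity
  have hident : v ⬝ᵥ (Δ *ᵥ v) - u ⬝ᵥ (Δ *ᵥ u) =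
      2 * (w ⬝ᵥ (Δ *ᵥ v)) - w ⬝ᵥ (Δ *ᵥ w) := by
    have e1 : w ⬝ᵥ (Δ *ᵥ v) = v ⬝ᵥ (Δ *ᵥ v) - u ⬝ᵥ (Δ *ᵥ v) := by
      rw [hwdef, sub_dotProduct]
    have e2 : w ⬝ᵥ (Δ *ᵥ w) = v ⬝ᵥ (Δ *ᵥ v) - u ⬝ᵥ (Δ *ᵥ v) - (v ⬝ᵥ (Δ *ᵥ u) - u ⬝ᵥ (Δ *ᵥ u)) := by
      rw [hwdef, sub_dotProduct, Matrix.mulVec_sub, dotProduct_sub, dotProduct_sub]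
      ring
    have e3 : u ⬝ᵥ (Δ *ᵥ v) = v ⬝ᵥ (Δ *ᵥ u) := hsym u v
    linarith
  -- negativity of the w-quadratic term
  have hwneg : w ⬝ᵥ (Δ *ᵥ w) ≤ 0 := by
    rcases eq_or_ne w 0 with h | h
    · rw [h]; simp
    · exact le_of_lt (hΔneg w hw0 h)
  -- sum estimate
  have hsumF : (∑ i, F (v i)) - (∑ i, F (u i)) ≤
      ∑ i, (f (u i) * w i + κ * (w i) ^ 2) := by
    rw [← Finset.sum_sub_distrib]
    apply Finset.sum_le_sum
    intro i _
    have hwi : w i = v i - u i := by rw [hwdef]; simp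
    rw [hF, hf, hwi]
    exact quartic_taylor κ β (u i) (v i) hκ (hub i) (hvb i)
  have hε2 : (0:ℝ) ≤ ε ^ 2 / 2 := by positivity
  have hDneg : ε ^ 2 / 2 * (w ⬝ᵥ (Δ *ᵥ w)) ≤ 0 := mul_nonpos_of_nonneg_of_nonpos hε2 hwneg
  rw [hE]
  simp only
  rw [hwg]
  nlinarith [hident, hsumF, hDneg]
end
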